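/- arXiv:1902.02968 — 2 statements merged into one kernel-verified Lean document; each statement's English description precedes it below -/
import Mathlib

section
/- Assume additionally that ω > 0, that x* ∈ D₀ satisfies F(x*) = 0, and that the open ball S(x*, 2/ω) = {z : ‖z − x*‖ < 2/ω} is contained in D₀. Then x* is the unique zero of F in S(x*, 2/ω): if y ∈ S(x*, 2/ω) and F(y) = 0, then y = x*. -/
noncomputable def pinv {n m : ℕ}
    (A : EuclideanSpace ℂ (Fin n) →L[ℂ] EuclideanSpace ℂ (Fin m)) :
    EuclideanSpace ℂ (Fin m) →L[ℂ] EuclideanSpace ℂ (Fin n) :=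
  (ContinuousLinearMap.inverse ((ContinuousLinearMap.adjoint A) ∘L A)) ∘L
    ContinuousLinearMap.adjoint A

noncomputable def newtonIter {n m : ℕ}
    (F : EuclideanSpace ℂ (Fin n) → EuclideanSpace ℂ (Fin m))
    (x0 : EuclideanSpace ℂ (Fin n)) : ℕ → EuclideanSpace ℂ (Fin n)
  | 0 => x0
  | (k+1) => newtonIter F x0 k - pinv (fderiv ℂ F (newtonIter F x0 k)) (F (newtonIter F x0 k))

noncomputable def newtonStep {n m : ℕ}
    (F : EuclideanSpace ℂ (Fin n) → EuclideanSpace ℂ (Fin m))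
    (x0 : EuclideanSpace ℂ (Fin n)) (k : ℕ) : EuclideanSpace ℂ (Fin n) :=
  newtonIter F x0 (k+1) - newtonIter F x0 k

/-! With `d = y - x*` and `P = J(y)†`, the path `s ↦ s • d - P (F (x* + s • d) - F x*)` has
derivative `P (J(y) - J(x* + s • d)) d`, of norm at most `ω (1 - s) ‖d‖²` by the affine
covariant Lipschitz condition taken with `t = 1`. Comparing with `s ↦ ω ‖d‖² (s - s² / 2)` on
`[0, 1]` gives `‖d - P (F y - F x*)‖ ≤ ω / 2 ‖d‖²`; for two zeros of `F` this reads `‖d‖ ≤ ω / 2 ‖d‖²`,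
which forces `d = 0` when `‖d‖ < 2 / ω`. -/

open Set

theorem ContinuousLinearMap.isInvertible_of_injective {𝕜 E : Type*} [NontriviallyNormedField 𝕜]
    [CompleteSpace 𝕜] [NormedAddCommGroup E] [NormedSpace 𝕜 E] [FiniteDimensional 𝕜 E]
    {f : E →L[𝕜] E} (hf : Function.Injective f) : f.IsInvertible :=
  ⟨(LinearEquiv.ofInjectiveEndo (f : E →ₗ[𝕜] E) hf).toContinuousLinearEquiv, rfl⟩

theorem pinv_comp_self {n m : ℕ} {A : EuclideanSpace ℂ (Fin n) →L[ℂ] EuclideanSpace ℂ (Fin m)}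
    (hA : Function.Injective A) : pinv A ∘L A = .id ℂ _ := by
  rw [pinv, ContinuousLinearMap.comp_assoc]
  refine (ContinuousLinearMap.isInvertible_of_injective ?_).inverse_comp_self
  rwa [ContinuousLinearMap.coe_comp, ContinuousLinearMap.adjoint_comp_self_injective_iff]

section

variable {𝕜 E G : Type*} [NontriviallyNormedField 𝕜] [NormedAlgebra ℝ 𝕜]
  [NormedAddCommGroup E] [NormedSpace 𝕜 E] [NormedSpace ℝ E] [IsScalarTower ℝ 𝕜 E]
  [NormedAddCommGroup G] [NormedSpace 𝕜 G] [NormedSpace ℝ G] [IsScalarTower ℝ 𝕜 G]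

theorem norm_sub_sub_leftInverse_apply_sub_le {f : E → G} {J : E → E →L[𝕜] G} {P : G →L[𝕜] E}
    {x y : E} {ω : ℝ}
    (hf : ∀ t ∈ Icc (0 : ℝ) 1, HasFDerivAt f (J (x + t • (y - x))) (x + t • (y - x)))
    (hP : P ∘L J y = .id 𝕜 E)
    (hJ : ∀ t ∈ Icc (0 : ℝ) 1, ‖P ∘L (J y - J (x + t • (y - x)))‖ ≤ ω * (1 - t) * ‖y - x‖) :
    ‖(y - x) - P (f y - f x)‖ ≤ ω / 2 * ‖y - x‖ ^ 2 := by
  set d := y - x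
  have hPd : P (J y d) = d := by simpa using DFunLike.congr_fun hP d
  let g : ℝ → E := fun s => s • d - P (f (x + s • d) - f x)
  have hg : ∀ s ∈ Icc (0 : ℝ) 1, HasDerivAt g ((P ∘L (J y - J (x + s • d))) d) s := by
    intro s hs
    have hline : HasDerivAt (fun s : ℝ => x + s • d) d s := by
      simpa using ((hasDerivAt_id s).smul_const d).const_add x
    have hfline := ((hf s hs).restrictScalars ℝ).comp_hasDerivAt s hline
    convert ((hasDerivAt_id s).smul_const d).sub
      ((P.restrictScalars ℝ).hasFDerivAt.comp_hasDerivAt s (hfline.sub_const (f x))) using 1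
    · rfl
    · rw [ContinuousLinearMap.comp_apply, sub_apply, map_sub, hPd]
      simp
  have hB : ∀ s, HasDerivAt (fun s => ω * ‖d‖ ^ 2 * (s - s ^ 2 / 2)) (ω * ‖d‖ ^ 2 * (1 - s)) s :=
    fun s => (((hasDerivAt_id' s).sub ((hasDerivAt_pow 2 s).div_const 2)).const_mul
      (ω * ‖d‖ ^ 2)).congr_deriv (by ring)
  have hbound : ∀ s ∈ Ico (0 : ℝ) 1,
      ‖(P ∘L (J y - J (x + s • d))) d‖ ≤ ω * ‖d‖ ^ 2 * (1 - s) := fun s hs =>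
    calc _ ≤ ‖P ∘L (J y - J (x + s • d))‖ * ‖d‖ := ContinuousLinearMap.le_opNorm _ _
      _ ≤ ω * (1 - s) * ‖d‖ * ‖d‖ := by gcongr; exact hJ s (Ico_subset_Icc_self hs)
      _ = _ := by ring
  have := image_norm_le_of_norm_deriv_right_le_deriv_boundary
    (fun s hs => (hg s hs).continuousAt.continuousWithinAt)
    (fun s hs => (hg s (Ico_subset_Icc_self hs)).hasDerivWithinAt) (by simp [g]) hB hbound
    (right_mem_Icc.2 zero_le_one)
  convert this using 1
  · simp [g, d]
  · ring

end

theorem eq_zero_of_le_half_mul_sq {r ω : ℝ} (hω : 0 < ω) (hr₀ : 0 ≤ r) (hr : r < 2 / ω)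
    (h : r ≤ ω / 2 * r ^ 2) : r = 0 := by
  by_contra hne
  have hpos : 0 < r := lt_of_le_of_ne hr₀ (Ne.symm hne)
  have : ω * r < 2 := by rwa [lt_div_iff₀ hω, mul_comm] at hr
  nlinarith

theorem newton_mysovskikh_uniqueness_general {n m : ℕ}
    (F : EuclideanSpace ℂ (Fin n) → EuclideanSpace ℂ (Fin m)) (hF : ContDiff ℂ 1 F)
    (xstar : EuclideanSpace ℂ (Fin n)) (D0 : Set (EuclideanSpace ℂ (Fin n)))
    (ω : ℝ) (hω : 0 < ω)
    (hinj : ∀ x ∈ D0, Function.Injective (fderiv ℂ F x))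
    (hLip : ∀ x ∈ D0, ∀ y ∈ D0, ∀ t ∈ Set.Icc (0:ℝ) 1,
      ‖(pinv (fderiv ℂ F y)) ∘L (fderiv ℂ F (x + t • (y - x)) - fderiv ℂ F x)‖
        ≤ ω * t * ‖y - x‖)
    (hFstar : F xstar = 0)
    (hball : {z : EuclideanSpace ℂ (Fin n) | ‖z - xstar‖ < 2 / ω} ⊆ D0) :
    ∀ y : EuclideanSpace ℂ (Fin n), ‖y - xstar‖ < 2 / ω → F y = 0 → y = xstar := by
  intro y hy hFy
  have hyD0 : y ∈ D0 := hball hy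
  have hseg : ∀ t ∈ Icc (0 : ℝ) 1, xstar + t • (y - xstar) ∈ D0 := fun t ht =>
    hball <| mem_ball_iff_norm.1 <| (convex_ball xstar (2 / ω)).add_smul_sub_mem
      (Metric.mem_ball_self (by positivity)) (mem_ball_iff_norm.2 hy) ht
  have hdrift : ∀ t ∈ Icc (0 : ℝ) 1, ‖pinv (fderiv ℂ F y) ∘L
      (fderiv ℂ F y - fderiv ℂ F (xstar + t • (y - xstar)))‖ ≤ ω * (1 - t) * ‖y - xstar‖ := by
    intro t ht
    have hrest : y - (xstar + t • (y - xstar)) = (1 - t) • (y - xstar) := by module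
    have h := hLip _ (hseg t ht) y hyD0 1 (right_mem_Icc.2 zero_le_one)
    rwa [one_smul, add_sub_cancel, hrest, norm_smul, Real.norm_of_nonneg (sub_nonneg.2 ht.2),
      mul_one, ← mul_assoc] at h
  have hnewton := norm_sub_sub_leftInverse_apply_sub_le
    (fun t _ => (hF.differentiable one_ne_zero _).hasFDerivAt) (pinv_comp_self (hinj y hyD0)) hdrift
  rw [hFy, hFstar, sub_self, map_zero, sub_zero] at hnewton
  exact sub_eq_zero.1 <| norm_eq_zero.1 <| eq_zero_of_le_half_mul_sq hω (norm_nonneg _) hy hnewton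

/-- Uniqueness of the zero `x*` of `F` in the open ball `S(x*, 2/ω)`. -/
theorem newton_mysovskikh_uniqueness {n m : ℕ} (hn : 0 < n) (hnm : n ≤ m)
    (F : EuclideanSpace ℂ (Fin n) → EuclideanSpace ℂ (Fin m)) (hF : ContDiff ℂ 1 F)
    (xstar : EuclideanSpace ℂ (Fin n)) (D0 : Set (EuclideanSpace ℂ (Fin n)))
    (hD0open : IsOpen D0) (hD0conv : Convex ℝ D0)
    (ω : ℝ) (hω : 0 < ω)
    (hinj : ∀ x ∈ D0, Function.Injective (fderiv ℂ F x))
    (hLip : ∀ x ∈ D0, ∀ y ∈ D0, ∀ t ∈ Set.Icc (0:ℝ) 1,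
      ‖(pinv (fderiv ℂ F y)) ∘L (fderiv ℂ F (x + t • (y - x)) - fderiv ℂ F x)‖
        ≤ ω * t * ‖y - x‖)
    (hxstar : xstar ∈ D0) (hFstar : F xstar = 0)
    (hball : {z : EuclideanSpace ℂ (Fin n) | ‖z - xstar‖ < 2 / ω} ⊆ D0) :
    ∀ y : EuclideanSpace ℂ (Fin n), ‖y - xstar‖ < 2 / ω → F y = 0 → y = xstar :=
  newton_mysovskikh_uniqueness_general F hF xstar D0 ω hω hinj hLip hFstar hball
end

section
/- Let H : E × ℝ → F' be continuously differentiable and let x : ℝ → E be differentiable with H(x(t), t) = 0 for all t. Then the path satisfies the Davidenko differential equation H_x(x(t), t)(ẋ(t)) + H_t(x(t), t) = 0 for all t, where H_x and H_t denote the partial derivatives of H with respect to the first and second argument. Moreover, if H_x(x(t), t) is injective, then ẋ(t) = −H_x(x(t), t)† H_t(x(t), t). -/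
namespace ContinuousLinearMap

theorem isInvertible_of_injective_s12 {𝕜 E : Type*} [NontriviallyNormedField 𝕜]
    [CompleteSpace 𝕜] [NormedAddCommGroup E] [NormedSpace 𝕜 E] [FiniteDimensional 𝕜 E]
    {f : E →L[𝕜] E}
    (hf : Function.Injective f) : f.IsInvertible :=
  ⟨(LinearEquiv.ofInjectiveEndo f.toLinearMap hf).toContinuousLinearEquiv, rfl⟩

theorem isInvertible_adjoint_comp_self {𝕜 E F : Type*} [RCLike 𝕜]
    [NormedAddCommGroup E] [InnerProductSpace 𝕜 E] [FiniteDimensional 𝕜 E] [CompleteSpace E]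
    [NormedAddCommGroup F] [InnerProductSpace 𝕜 F] [CompleteSpace F] {A : E →L[𝕜] F}
    (hA : Function.Injective A) : (adjoint A ∘L A).IsInvertible :=
  isInvertible_of_injective_s12 <| by
    rwa [coe_comp, adjoint_comp_self_injective_iff]

end ContinuousLinearMap

theorem pinv_apply_apply {n m : ℕ}
    {A : EuclideanSpace ℂ (Fin n) →L[ℂ] EuclideanSpace ℂ (Fin m)}
    (hA : Function.Injective A) (v : EuclideanSpace ℂ (Fin n)) :
    pinv A (A v) = v :=
  (ContinuousLinearMap.isInvertible_adjoint_comp_self hA).inverse_apply_self v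

section Davidenko

variable {E F : Type*} [NormedAddCommGroup E] [NormedSpace ℝ E]
  [NormedAddCommGroup F] [NormedSpace ℝ F]

theorem fderiv_partial_fst_eq_comp_inl {H : E × ℝ → F} {u : E} {t : ℝ}
    (hH : DifferentiableAt ℝ H (u, t)) :
    fderiv ℝ (fun v => H (v, t)) u = (fderiv ℝ H (u, t)).comp (.inl ℝ E ℝ) :=
  (hH.hasFDerivAt.comp u (hasFDerivAt_prodMk_left u t)).fderiv

theorem deriv_partial_snd_eq_fderiv_apply {H : E × ℝ → F} {u : E} {t : ℝ}
    (hH : DifferentiableAt ℝ H (u, t)) :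
    deriv (fun s => H (u, s)) t = fderiv ℝ H (u, t) (0, 1) :=
  (hH.hasFDerivAt.comp_hasDerivAt t ((hasDerivAt_const t u).prodMk (hasDerivAt_id t))).deriv

theorem fderiv_apply_tangent_eq_zero_of_path {H : E × ℝ → F} {x : ℝ → E} {x' : E} {t : ℝ}
    (hH : DifferentiableAt ℝ H (x t, t)) (hx : HasDerivAt x x' t)
    (hsol : ∀ s, H (x s, s) = 0) :
    fderiv ℝ H (x t, t) (x', 1) = 0 := by
  have htotal : HasDerivAt (fun s => H (x s, s)) (fderiv ℝ H (x t, t) (x', 1)) t :=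
    hH.hasFDerivAt.comp_hasDerivAt (f := fun s => (x s, s)) t (hx.prodMk (hasDerivAt_id t))
  simp only [hsol] at htotal
  exact htotal.unique (hasDerivAt_const t 0)

theorem fderiv_partial_fst_apply_add_deriv_partial_snd_eq_zero {H : E × ℝ → F} {x : ℝ → E}
    {x' : E} {t : ℝ}
    (hH : DifferentiableAt ℝ H (x t, t)) (hx : HasDerivAt x x' t)
    (hsol : ∀ s, H (x s, s) = 0) :
    fderiv ℝ (fun v => H (v, t)) (x t) x' + deriv (fun s => H (x t, s)) t = 0 := by
  rw [fderiv_partial_fst_eq_comp_inl hH, deriv_partial_snd_eq_fderiv_apply hH,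
    ContinuousLinearMap.comp_apply, ContinuousLinearMap.inl_apply, ← map_add, Prod.mk_add_mk,
    add_zero, zero_add]
  exact fderiv_apply_tangent_eq_zero_of_path hH hx hsol

end Davidenko

theorem davidenko_equation_general {n m : ℕ}
    (H : EuclideanSpace ℂ (Fin n) × ℝ → EuclideanSpace ℂ (Fin m))
    (hH : ContDiff ℝ 1 H)
    (hHx : ∀ (u : EuclideanSpace ℂ (Fin n)) (t : ℝ),
      DifferentiableAt ℂ (fun v => H (v, t)) u)
    (x x' : ℝ → EuclideanSpace ℂ (Fin n))
    (hx : ∀ t : ℝ, HasDerivAt x (x' t) t)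
    (hsol : ∀ t : ℝ, H (x t, t) = 0) :
    ∀ t : ℝ,
      (fderiv ℂ (fun v => H (v, t)) (x t)) (x' t) + deriv (fun s => H (x t, s)) t = 0 ∧
      (Function.Injective (fderiv ℂ (fun v => H (v, t)) (x t)) →
        x' t = - pinv (fderiv ℂ (fun v => H (v, t)) (x t)) (deriv (fun s => H (x t, s)) t)) := by
  intro t
  have heq : (fderiv ℂ (fun v => H (v, t)) (x t)) (x' t) + deriv (fun s => H (x t, s)) t = 0 := by
    have hreal := fderiv_partial_fst_apply_add_deriv_partial_snd_eq_zero
      (hH.differentiable one_ne_zero _) (hx t) hsol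
    rwa [(hHx (x t) t).fderiv_restrictScalars ℝ,
      ContinuousLinearMap.coe_restrictScalars'] at hreal
  refine ⟨heq, fun hinj => ?_⟩
  rw [← eq_neg_iff_add_eq_zero] at heq
  rw [← pinv_apply_apply hinj (x' t), heq, map_neg]

/-- The Davidenko differential equation: a differentiable solution path of
`H(x(t), t) = 0` satisfies `H_x(x(t), t)(ẋ(t)) + H_t(x(t), t) = 0`, and if moreover
`H_x(x(t), t)` is injective then `ẋ(t) = −H_x(x(t), t)† H_t(x(t), t)`. -/
theorem davidenko_equation {n m : ℕ} (hn : 0 < n) (hnm : n ≤ m)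
    (H : EuclideanSpace ℂ (Fin n) × ℝ → EuclideanSpace ℂ (Fin m))
    (hH : ContDiff ℝ 1 H)
    (hHx : ∀ (u : EuclideanSpace ℂ (Fin n)) (t : ℝ),
      DifferentiableAt ℂ (fun v => H (v, t)) u)
    (x x' : ℝ → EuclideanSpace ℂ (Fin n))
    (hx : ∀ t : ℝ, HasDerivAt x (x' t) t)
    (hsol : ∀ t : ℝ, H (x t, t) = 0) :
    ∀ t : ℝ,
      (fderiv ℂ (fun v => H (v, t)) (x t)) (x' t) + deriv (fun s => H (x t, s)) t = 0 ∧
      (Function.Injective (fderiv ℂ (fun v => H (v, t)) (x t)) →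
        x' t = - pinv (fderiv ℂ (fun v => H (v, t)) (x t)) (deriv (fun s => H (x t, s)) t)) :=
  davidenko_equation_general H hH hHx x x' hx hsol
end
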